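/- Let d ≥ 1 and let w_1,…,w_d ∈ ℝ^d satisfy dist(w_j, Span{w_1,…,w_{j−1}}) ≥ 1 for each 1 ≤ j ≤ d. Then for every λ > 0, ∫_{ζ ∈ ℝ^d, |ζ| ≤ 1} exp(−λ Σ_{j=1}^d ‖ζ·w_j‖²) dζ = O_d((1+λ)^{−d/2}). -/

import Mathlib

open scoped RealInnerProductSpace

/-- Distance from a real number to the nearest integer. -/
noncomputable def distNearestInt (x : ℝ) : ℝ := |x - round x|

open MeasureTheory Real
open InnerProductSpace

lemma measurable_distNearestInt : Measurable distNearestInt := by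
  have h : Measurable fun x : ℝ => (round x : ℝ) := by
    have : Measurable (round : ℝ → ℤ) := by
      have h2 : (round : ℝ → ℤ) = fun x : ℝ => ⌊x + 1/2⌋ := funext round_eq
      rw [h2]
      exact Int.measurable_floor.comp (measurable_id.add_const _)
    exact (measurable_from_top.comp this : Measurable fun x : ℝ => ((round x : ℤ) : ℝ))
  exact (measurable_id.sub h).abs

lemma distNearestInt_nonneg (x : ℝ) : 0 ≤ distNearestInt x := abs_nonneg _

lemma distNearestInt_add_one (x : ℝ) : distNearestInt (x + 1) = distNearestInt x := by
  unfold distNearestInt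
  rw [round_add_one]
  push_cast
  ring_nf

lemma periodic_exp_distNI (lam : ℝ) :
    Function.Periodic (fun u => Real.exp (-lam * distNearestInt u ^ 2)) 1 := by
  intro x
  simp [distNearestInt_add_one]

lemma measurable_exp_distNI (lam : ℝ) :
    Measurable fun u : ℝ => Real.exp (-lam * distNearestInt u ^ 2) :=
  Real.measurable_exp.comp ((measurable_distNearestInt.pow_const 2).const_mul (-lam))

lemma exp_distNI_le_one {lam : ℝ} (hlam : 0 ≤ lam) (u : ℝ) :
    Real.exp (-lam * distNearestInt u ^ 2) ≤ 1 := by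
  rw [← Real.exp_zero]
  apply Real.exp_le_exp.2
  have : 0 ≤ lam * distNearestInt u ^ 2 := by positivity
  linarith

lemma intervalIntegrable_exp_distNI (lam c e a b : ℝ) :
    IntervalIntegrable (fun t => Real.exp (-lam * distNearestInt (c * t + e) ^ 2))
      volume a b := by
  apply IntervalIntegrable.mono_fun' (g := fun _ => Real.exp (|lam|))
    intervalIntegrable_const
  · exact ((measurable_exp_distNI lam).comp
      ((measurable_id.const_mul c).add_const e)).aestronglyMeasurable
  · filter_upwards with t
    rw [Real.norm_eq_abs, abs_of_pos (Real.exp_pos _)]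
    apply Real.exp_le_exp.2
    have h1 : distNearestInt (c * t + e) ≤ 1 := by
      unfold distNearestInt
      have := abs_sub_round (c * t + e)
      linarith
    have h2 : distNearestInt (c * t + e) ^ 2 ≤ 1 := by
      have := distNearestInt_nonneg (c * t + e)
      nlinarith
    have h3 : -lam * distNearestInt (c * t + e) ^ 2 ≤ |lam| * 1 := by
      have := abs_nonneg lam
      have h4 : -lam ≤ |lam| := neg_le_abs lam
      have h5 : 0 ≤ distNearestInt (c * t + e) ^ 2 := by positivity
      nlinarith
    linarith

lemma exp_distNI_le_sum {lam : ℝ} (u : ℝ) (hu : u ∈ Set.Icc (0:ℝ) 1) :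
    Real.exp (-lam * distNearestInt u ^ 2)
      ≤ Real.exp (-lam * u ^ 2) + Real.exp (-lam * (1 - u) ^ 2) := by
  obtain ⟨h0, h1⟩ := hu
  by_cases h : u < 1/2
  · have hr : round u = 0 := by
      rw [round_eq]
      apply Int.floor_eq_zero_iff.2
      constructor <;> simp <;> linarith
    have : distNearestInt u = u := by unfold distNearestInt; rw [hr]; simp [abs_of_nonneg h0]
    rw [this]
    nlinarith [Real.exp_pos (-lam * (1 - u)^2)]
  · have hr : round u = 1 := by
      rw [round_eq]
      have : ⌊u + 1/2⌋ = 1 := by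
        apply Int.floor_eq_iff.2 <;> simp <;> constructor <;> linarith
      simpa using this
    have : distNearestInt u = 1 - u := by
      unfold distNearestInt; rw [hr]; rw [abs_sub_comm]; simp [abs_of_nonneg (by linarith : (0:ℝ) ≤ 1 - u)]
    rw [this]
    nlinarith [Real.exp_pos (-lam * u^2)]

/-- Bound for the basic period integral. -/
lemma Ib_bound {lam : ℝ} (hlam : 0 < lam) :
    ∫ u in (0:ℝ)..1, Real.exp (-lam * distNearestInt u ^ 2)
      ≤ Real.exp 1 * Real.sqrt π * (1 + lam) ^ (-(1:ℝ)/2) := by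
  have hint1 : IntervalIntegrable (fun u => Real.exp (-lam * u ^ 2)) volume 0 1 :=
    (Continuous.intervalIntegrable (by continuity) _ _)
  have hint2 : IntervalIntegrable (fun u => Real.exp (-lam * (1 - u) ^ 2)) volume 0 1 :=
    (Continuous.intervalIntegrable (by continuity) _ _)
  have h1 : ∫ u in (0:ℝ)..1, Real.exp (-lam * distNearestInt u ^ 2)
      ≤ ∫ u in (0:ℝ)..1, (Real.exp (-lam * u ^ 2) + Real.exp (-lam * (1 - u) ^ 2)) := by
    apply intervalIntegral.integral_mono_on (by norm_num)
      (by simpa using intervalIntegrable_exp_distNI lam 1 0 0 1) (hint1.add hint2)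
    intro u hu
    exact exp_distNI_le_sum u hu
  have h2 : ∫ u in (0:ℝ)..1, (Real.exp (-lam * u ^ 2) + Real.exp (-lam * (1 - u) ^ 2))
      = (∫ u in (0:ℝ)..1, Real.exp (-lam * u ^ 2))
        + ∫ u in (0:ℝ)..1, Real.exp (-lam * (1 - u) ^ 2) :=
    intervalIntegral.integral_add hint1 hint2
  have h3 : ∫ u in (0:ℝ)..1, Real.exp (-lam * (1 - u) ^ 2)
      = ∫ u in (0:ℝ)..1, Real.exp (-lam * u ^ 2) := by
    have := intervalIntegral.integral_comp_sub_left (a := 0) (b := 1)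
      (fun u => Real.exp (-lam * u ^ 2)) 1
    simpa using this
  have h4 : ∫ u in (0:ℝ)..1, Real.exp (-lam * u ^ 2)
      ≤ Real.exp 1 * (Real.sqrt (π / (1 + lam)) / 2) := by
    have hb : (0:ℝ) < 1 + lam := by linarith
    have hstep : ∫ u in (0:ℝ)..1, Real.exp (-lam * u ^ 2)
        ≤ ∫ u in (0:ℝ)..1, Real.exp 1 * Real.exp (-(1 + lam) * u ^ 2) := by
      apply intervalIntegral.integral_mono_on (by norm_num) hint1
        ((Continuous.intervalIntegrable (by continuity) _ _))
      intro u hu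
      rw [← Real.exp_add]
      apply Real.exp_le_exp.2
      obtain ⟨h0, hu1⟩ := hu
      nlinarith
    have hstep2 : ∫ u in (0:ℝ)..1, Real.exp 1 * Real.exp (-(1 + lam) * u ^ 2)
        = Real.exp 1 * ∫ u in (0:ℝ)..1, Real.exp (-(1 + lam) * u ^ 2) :=
      intervalIntegral.integral_const_mul _ _
    have hstep3 : ∫ u in (0:ℝ)..1, Real.exp (-(1 + lam) * u ^ 2)
        ≤ ∫ u in Set.Ioi (0:ℝ), Real.exp (-(1 + lam) * u ^ 2) := by
      rw [intervalIntegral.integral_of_le (by norm_num : (0:ℝ) ≤ 1)]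
      apply setIntegral_mono_set (integrable_exp_neg_mul_sq hb).integrableOn
      · filter_upwards with x using Real.exp_nonneg _
      · exact Filter.Eventually.of_forall fun x hx => hx.1
    rw [integral_gaussian_Ioi] at hstep3
    calc ∫ u in (0:ℝ)..1, Real.exp (-lam * u ^ 2)
        ≤ Real.exp 1 * ∫ u in (0:ℝ)..1, Real.exp (-(1 + lam) * u ^ 2) := by
          rw [← hstep2]; exact hstep
      _ ≤ Real.exp 1 * (Real.sqrt (π / (1 + lam)) / 2) := by
          apply mul_le_mul_of_nonneg_left hstep3 (Real.exp_nonneg 1)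
  have hsqrt : Real.sqrt (π / (1 + lam)) = Real.sqrt π * (1 + lam) ^ (-(1:ℝ)/2) := by
    have hb : (0:ℝ) < 1 + lam := by linarith
    rw [Real.sqrt_div Real.pi_pos.le, show (-(1:ℝ)/2) = -(1/2) by ring,
      Real.rpow_neg hb.le, ← Real.sqrt_eq_rpow, div_eq_mul_inv]
  rw [hsqrt] at h4
  calc ∫ u in (0:ℝ)..1, Real.exp (-lam * distNearestInt u ^ 2)
      ≤ (∫ u in (0:ℝ)..1, Real.exp (-lam * u ^ 2))
        + ∫ u in (0:ℝ)..1, Real.exp (-lam * (1 - u) ^ 2) := h1.trans_eq h2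
    _ = 2 * ∫ u in (0:ℝ)..1, Real.exp (-lam * u ^ 2) := by rw [h3]; ring
    _ ≤ 2 * (Real.exp 1 * (Real.sqrt π * (1 + lam) ^ (-(1:ℝ)/2) / 2)) := by linarith
    _ = Real.exp 1 * Real.sqrt π * (1 + lam) ^ (-(1:ℝ)/2) := by ring

/-- The 1-D key bound for `c ≥ 1`. -/
lemma oneD_pos {lam c : ℝ} (hlam : 0 < lam) (hc : 1 ≤ c) (a : ℝ) :
    ∫ t in (-1:ℝ)..1, Real.exp (-lam * distNearestInt (c * t + a) ^ 2)
      ≤ 3 * ∫ u in (0:ℝ)..1, Real.exp (-lam * distNearestInt u ^ 2) := by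
  have hc0 : c ≠ 0 := by linarith
  have hcpos : (0:ℝ) < c := by linarith
  set g : ℝ → ℝ := fun u => Real.exp (-lam * distNearestInt u ^ 2) with hg
  have hgint : ∀ t₁ t₂ : ℝ, IntervalIntegrable g volume t₁ t₂ := by
    intro t₁ t₂
    have := intervalIntegrable_exp_distNI lam 1 0 t₁ t₂
    simp only [one_mul, add_zero] at this
    exact this
  have hgnonneg : ∀ u, 0 ≤ g u := fun u => Real.exp_nonneg _
  have hIb : (0:ℝ) ≤ ∫ u in (0:ℝ)..1, g u :=
    intervalIntegral.integral_nonneg (by norm_num) (fun u _ => hgnonneg u)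
  have hcv : ∫ t in (-1:ℝ)..1, g (c * t + a) = c⁻¹ * ∫ x in (c * (-1) + a)..(c * 1 + a), g x := by
    rw [intervalIntegral.integral_comp_mul_add g hc0 a]
    simp [smul_eq_mul]
  set N : ℕ := ⌈2 * c⌉₊ with hN
  have hNge : 2 * c ≤ (N:ℝ) := Nat.le_ceil _
  have hNlt : (N:ℝ) < 2 * c + 1 := Nat.ceil_lt_add_one (by positivity)
  have hper : Function.Periodic g 1 := periodic_exp_distNI lam
  have hper' : ∫ x in (a - c)..((a - c) + (N:ℤ) • (1:ℝ)), g x = (N:ℤ) • ∫ x in (0:ℝ)..1, g x := by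
    have h1 := hper.intervalIntegral_add_zsmul_eq (N:ℤ) (a - c) hgint
    have h2 := hper.intervalIntegral_add_eq (a - c) 0
    rw [h2, zero_add] at h1
    exact h1
  have hsplit : ∫ x in (a - c)..(a + c), g x ≤ ∫ x in (a - c)..((a - c) + (N:ℝ)), g x := by
    have hadj : (∫ x in (a - c)..(a + c), g x) + ∫ x in (a + c)..((a - c) + (N:ℝ)), g x
        = ∫ x in (a - c)..((a - c) + (N:ℝ)), g x :=
      intervalIntegral.integral_add_adjacent_intervals (hgint _ _) (hgint _ _)
    have hnn : 0 ≤ ∫ x in (a + c)..((a - c) + (N:ℝ)), g x :=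
      intervalIntegral.integral_nonneg (by linarith) (fun u _ => hgnonneg u)
    linarith
  have heq : ∫ x in (a - c)..((a - c) + (N:ℝ)), g x = (N:ℝ) * ∫ x in (0:ℝ)..1, g x := by
    have : ((N:ℤ) • (1:ℝ)) = (N:ℝ) := by simp
    rw [← this, hper']
    simp
  calc ∫ t in (-1:ℝ)..1, g (c * t + a)
      = c⁻¹ * ∫ x in (c * (-1) + a)..(c * 1 + a), g x := hcv
    _ = c⁻¹ * ∫ x in (a - c)..(a + c), g x := by ring_nf
    _ ≤ c⁻¹ * ((N:ℝ) * ∫ x in (0:ℝ)..1, g x) := by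
        apply mul_le_mul_of_nonneg_left _ (by positivity)
        rw [← heq]; exact hsplit
    _ ≤ 3 * ∫ x in (0:ℝ)..1, g x := by
        have h1 : c⁻¹ * (N:ℝ) ≤ 3 := by
          rw [inv_mul_le_iff₀ hcpos]
          nlinarith
        have := mul_le_mul_of_nonneg_right h1 hIb
        nlinarith [hIb]

lemma oneD_abs {lam c : ℝ} (hlam : 0 < lam) (hc : 1 ≤ |c|) (a : ℝ) :
    ∫ t in (-1:ℝ)..1, Real.exp (-lam * distNearestInt (c * t + a) ^ 2)
      ≤ 3 * ∫ u in (0:ℝ)..1, Real.exp (-lam * distNearestInt u ^ 2) := by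
  rcases le_or_gt 1 c with h | h
  · exact oneD_pos hlam h a
  · have hneg : c ≤ -1 := by
      rcases abs_cases c with ⟨h1, _⟩ | ⟨h1, _⟩ <;> linarith
    have hflip : ∫ t in (-1:ℝ)..1, Real.exp (-lam * distNearestInt (c * t + a) ^ 2)
        = ∫ t in (-1:ℝ)..1, Real.exp (-lam * distNearestInt ((-c) * t + a) ^ 2) := by
      have := intervalIntegral.integral_comp_neg (a := -1) (b := 1)
        (fun t => Real.exp (-lam * distNearestInt ((-c) * t + a) ^ 2))
      simp only [neg_neg, neg_mul, mul_neg] at this ⊢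
      rw [← this]
    rw [hflip]
    exact oneD_pos hlam (by linarith) a

/-- `ENNReal` version of the 1-D bound, over the set `Icc (-1) 1`. -/
lemma oneD_lintegral {lam c : ℝ} (hlam : 0 < lam) (hc : 1 ≤ |c|) (a : ℝ) :
    ∫⁻ t in Set.Icc (-1:ℝ) 1, ENNReal.ofReal (Real.exp (-lam * distNearestInt (c * t + a) ^ 2))
      ≤ ENNReal.ofReal (3 * ∫ u in (0:ℝ)..1, Real.exp (-lam * distNearestInt u ^ 2)) := by
  have hIoc : ∫⁻ t in Set.Icc (-1:ℝ) 1,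
        ENNReal.ofReal (Real.exp (-lam * distNearestInt (c * t + a) ^ 2))
      = ∫⁻ t in Set.Ioc (-1:ℝ) 1,
        ENNReal.ofReal (Real.exp (-lam * distNearestInt (c * t + a) ^ 2)) := by
    exact (setLIntegral_congr (MeasureTheory.Ioc_ae_eq_Icc (μ := volume))).symm
  have hint : IntegrableOn (fun t => Real.exp (-lam * distNearestInt (c * t + a) ^ 2))
      (Set.Ioc (-1:ℝ) 1) volume := by
    have := intervalIntegrable_exp_distNI lam c a (-1) 1
    rwa [intervalIntegrable_iff_integrableOn_Ioc_of_le (by norm_num)] at this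
  rw [hIoc, ← ofReal_integral_eq_lintegral_ofReal hint
    (Filter.Eventually.of_forall fun t => Real.exp_nonneg _)]
  apply ENNReal.ofReal_le_ofReal
  rw [← intervalIntegral.integral_of_le (by norm_num : (-1:ℝ) ≤ 1)]
  exact oneD_abs hlam hc a

noncomputable def KC (lam : ℝ) : ℝ :=
  3 * (Real.exp 1 * Real.sqrt π) * (1 + lam) ^ (-(1:ℝ)/2)

lemma KC_nonneg {lam : ℝ} (hlam : 0 < lam) : 0 ≤ KC lam := by
  unfold KC
  have h1 : (0:ℝ) < 1 + lam := by linarith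
  have := Real.rpow_nonneg h1.le (-(1:ℝ)/2)
  have := Real.sqrt_nonneg π
  have := (Real.exp_pos 1).le
  positivity

lemma oneD_KC {lam c : ℝ} (hlam : 0 < lam) (hc : 1 ≤ |c|) (a : ℝ) :
    ∫⁻ t in Set.Icc (-1:ℝ) 1, ENNReal.ofReal (Real.exp (-lam * distNearestInt (c * t + a) ^ 2))
      ≤ ENNReal.ofReal (KC lam) := by
  refine (oneD_lintegral hlam hc a).trans (ENNReal.ofReal_le_ofReal ?_)
  have h := Ib_bound hlam
  unfold KC
  nlinarith [h]

lemma box_bound (n : ℕ) (lam : ℝ) (hlam : 0 < lam) :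
    ∀ A : Fin n → Fin n → ℝ, (∀ j, 1 ≤ |A j j|) → (∀ j i : Fin n, (j:ℕ) < (i:ℕ) → A j i = 0) →
    ∫⁻ ξ in Set.univ.pi (fun _ : Fin n => Set.Icc (-1:ℝ) 1),
      ENNReal.ofReal (Real.exp (-lam * ∑ j, distNearestInt (∑ i, A j i * ξ i) ^ 2))
      ∂(volume : Measure (Fin n → ℝ))
    ≤ ENNReal.ofReal ((KC lam) ^ n) := by
  induction n with
  | zero =>
    intro A _ _
    have hbox : (Set.univ.pi fun _ : Fin 0 => Set.Icc (-1:ℝ) 1) = Set.univ := by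
      ext x; simp
    have hvol : (volume : Measure (Fin 0 → ℝ)) Set.univ = 1 := by
      rw [MeasureTheory.volume_pi, Measure.pi_univ]
      simp
    simp [hbox, hvol, lintegral_const]
  | succ n IH =>
    intro A hdiag htri
    set e := MeasurableEquiv.piFinSuccAbove (fun _ : Fin (n+1) => ℝ) (Fin.last n) with he
    have hmp : MeasurePreserving e.symm
        (volume : Measure (ℝ × (Fin n → ℝ))) (volume : Measure (Fin (n+1) → ℝ)) :=
      (volume_preserving_piFinSuccAbove (fun _ : Fin (n+1) => ℝ) (Fin.last n)).symm
    set F : (Fin (n+1) → ℝ) → ENNReal := fun ξ =>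
      ENNReal.ofReal (Real.exp (-lam * ∑ j, distNearestInt (∑ i, A j i * ξ i) ^ 2)) with hF
    have hFm : Measurable F := by
      apply Measurable.ennreal_ofReal
      apply Real.measurable_exp.comp
      apply Measurable.const_mul
      apply Finset.measurable_sum
      intro j _
      exact (measurable_distNearestInt.comp
        (Finset.measurable_sum _ (fun i _ => (measurable_pi_apply i).const_mul _))).pow_const 2
    have hsymm : ∀ (t : ℝ) (ξ : Fin n → ℝ), e.symm (t, ξ) = Fin.snoc ξ t := by
      intro t ξ
      show (Fin.insertNthEquiv (fun _ : Fin (n+1) => ℝ) (Fin.last n)) (t, ξ) = _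
      simp only [Fin.insertNthEquiv, Equiv.coe_fn_mk]
      exact Fin.insertNth_last' t ξ
    have hpre : e.symm ⁻¹' (Set.univ.pi fun _ : Fin (n+1) => Set.Icc (-1:ℝ) 1)
        = (Set.Icc (-1:ℝ) 1) ×ˢ (Set.univ.pi fun _ : Fin n => Set.Icc (-1:ℝ) 1) := by
      ext ⟨t, ξ⟩
      simp only [Set.mem_preimage, Set.mem_pi, Set.mem_univ, forall_true_left, Set.mem_prod,
        hsymm t ξ]
      constructor
      · intro h
        exact ⟨by simpa using h (Fin.last n), fun k => by simpa using h k.castSucc⟩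
      · rintro ⟨ht, hξ⟩ i
        refine Fin.lastCases ?_ ?_ i
        · simpa using ht
        · intro k; simpa using hξ k
    -- the (n)-dimensional matrix
    set A' : Fin n → Fin n → ℝ := fun j i => A j.castSucc i.castSucc with hA'
    set S : (Fin n → ℝ) → ℝ := fun ξ =>
      ∑ j, distNearestInt (∑ i, A' j i * ξ i) ^ 2 with hS
    set c : ℝ := A (Fin.last n) (Fin.last n) with hc
    set aoff : (Fin n → ℝ) → ℝ := fun ξ => ∑ i, A (Fin.last n) i.castSucc * ξ i with ha
    have hFsnoc : ∀ (t : ℝ) (ξ : Fin n → ℝ),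
        F (e.symm (t, ξ)) = ENNReal.ofReal (Real.exp (-lam * S ξ)) *
          ENNReal.ofReal (Real.exp (-lam * distNearestInt (c * t + aoff ξ) ^ 2)) := by
      intro t ξ
      rw [hsymm t ξ]
      have hinner : ∀ j : Fin (n+1),
          ∑ i, A j i * (Fin.snoc ξ t : Fin (n+1) → ℝ) i
            = (∑ i : Fin n, A j i.castSucc * ξ i) + A j (Fin.last n) * t := by
        intro j
        rw [Fin.sum_univ_castSucc]
        congr 1
        · exact Finset.sum_congr rfl fun i _ => by rw [Fin.snoc_castSucc]
        · rw [Fin.snoc_last]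
      have hsum : ∑ j, distNearestInt (∑ i, A j i * (Fin.snoc ξ t : Fin (n+1) → ℝ) i) ^ 2
          = S ξ + distNearestInt (c * t + aoff ξ) ^ 2 := by
        rw [Fin.sum_univ_castSucc]
        congr 1
        · apply Finset.sum_congr rfl
          intro j _
          rw [hinner j.castSucc]
          have hz : A j.castSucc (Fin.last n) = 0 :=
            htri _ _ (by simpa using j.is_lt)
          rw [hz, zero_mul, add_zero]
        · rw [hinner (Fin.last n)]
          rw [add_comm]
      show ENNReal.ofReal (Real.exp (-lam * ∑ j, distNearestInt
          (∑ i, A j i * (Fin.snoc ξ t : Fin (n+1) → ℝ) i) ^ 2)) = _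
      rw [hsum, show -lam * (S ξ + distNearestInt (c * t + aoff ξ) ^ 2)
          = -lam * S ξ + -lam * distNearestInt (c * t + aoff ξ) ^ 2 by ring,
        Real.exp_add, ENNReal.ofReal_mul (Real.exp_nonneg _)]
    have step1 : ∫⁻ ξ in Set.univ.pi (fun _ : Fin (n+1) => Set.Icc (-1:ℝ) 1), F ξ
        = ∫⁻ p in (Set.Icc (-1:ℝ) 1) ×ˢ (Set.univ.pi fun _ : Fin n => Set.Icc (-1:ℝ) 1),
            F (e.symm p) ∂(volume : Measure (ℝ × (Fin n → ℝ))) := by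
      rw [← hmp.setLIntegral_comp_preimage_emb e.symm.measurableEmbedding F _, hpre]
    have step2 : ∫⁻ p in (Set.Icc (-1:ℝ) 1) ×ˢ (Set.univ.pi fun _ : Fin n => Set.Icc (-1:ℝ) 1),
            F (e.symm p) ∂(volume : Measure (ℝ × (Fin n → ℝ)))
        = ∫⁻ ξ in (Set.univ.pi fun _ : Fin n => Set.Icc (-1:ℝ) 1),
            (∫⁻ t in Set.Icc (-1:ℝ) 1, F (e.symm (t, ξ))) := by
      rw [Measure.volume_eq_prod, ← Measure.prod_restrict]
      exact lintegral_prod_symm _ ((hFm.comp e.symm.measurable).comp measurable_id).aemeasurable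
    rw [step1, step2]
    have step3 : ∫⁻ ξ in (Set.univ.pi fun _ : Fin n => Set.Icc (-1:ℝ) 1),
            (∫⁻ t in Set.Icc (-1:ℝ) 1, F (e.symm (t, ξ)))
        ≤ ∫⁻ ξ in (Set.univ.pi fun _ : Fin n => Set.Icc (-1:ℝ) 1),
            (ENNReal.ofReal (Real.exp (-lam * S ξ)) * ENNReal.ofReal (KC lam)) := by
      refine lintegral_mono fun ξ => ?_
      dsimp only
      have : ∫⁻ t in Set.Icc (-1:ℝ) 1, F (e.symm (t, ξ))
          = ENNReal.ofReal (Real.exp (-lam * S ξ)) *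
            ∫⁻ t in Set.Icc (-1:ℝ) 1,
              ENNReal.ofReal (Real.exp (-lam * distNearestInt (c * t + aoff ξ) ^ 2)) := by
        rw [← lintegral_const_mul' _ _ ENNReal.ofReal_ne_top]
        exact lintegral_congr fun t => hFsnoc t ξ
      rw [this]
      exact mul_le_mul_right (oneD_KC hlam (hdiag (Fin.last n)) (aoff ξ)) _
    refine step3.trans ?_
    have step4 : ∫⁻ ξ in (Set.univ.pi fun _ : Fin n => Set.Icc (-1:ℝ) 1),
            (ENNReal.ofReal (Real.exp (-lam * S ξ)) * ENNReal.ofReal (KC lam))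
        = ENNReal.ofReal (KC lam) *
          ∫⁻ ξ in (Set.univ.pi fun _ : Fin n => Set.Icc (-1:ℝ) 1),
            ENNReal.ofReal (Real.exp (-lam * S ξ)) := by
      rw [lintegral_mul_const' _ _ ENNReal.ofReal_ne_top, mul_comm]
    rw [step4]
    have hIH := IH A' (fun j => hdiag j.castSucc)
      (fun j i hji => htri j.castSucc i.castSucc (by simpa using hji))
    calc ENNReal.ofReal (KC lam) * ∫⁻ ξ in (Set.univ.pi fun _ : Fin n => Set.Icc (-1:ℝ) 1),
            ENNReal.ofReal (Real.exp (-lam * S ξ))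
        ≤ ENNReal.ofReal (KC lam) * ENNReal.ofReal ((KC lam) ^ n) := mul_le_mul_right hIH _
      _ = ENNReal.ofReal ((KC lam) ^ (n+1)) := by
          rw [← ENNReal.ofReal_mul (KC_nonneg hlam), pow_succ, mul_comm]

theorem lemma_dspan (d : ℕ) (hd : 1 ≤ d) :
    ∃ C : ℝ, 0 < C ∧
      ∀ (w : Fin d → EuclideanSpace ℝ (Fin d)) (lam : ℝ), 0 < lam →
      (∀ j : Fin d, 1 ≤ Metric.infDist (w j)
        ((Submodule.span ℝ (w '' {i : Fin d | i < j}) : Submodule ℝ (EuclideanSpace ℝ (Fin d)))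
          : Set (EuclideanSpace ℝ (Fin d)))) →
      (∫ ζ in Metric.closedBall (0 : EuclideanSpace ℝ (Fin d)) 1,
          Real.exp (-lam * ∑ j, (distNearestInt (⟪ζ, w j⟫)) ^ 2))
        ≤ C * (1 + lam) ^ (-(d : ℝ) / 2) := by
  haveI : NeZero d := ⟨by omega⟩
  haveI : WellFoundedLT (Fin d) := inferInstance
  refine ⟨(3 * (Real.exp 1 * Real.sqrt π)) ^ d, by positivity, ?_⟩
  intro w lam hlam hw
  have h : Module.finrank ℝ (EuclideanSpace ℝ (Fin d)) = Fintype.card (Fin d) := by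
    simp [finrank_euclideanSpace_fin]
  -- the Gram-Schmidt vectors are all nonzero
  have hgs : ∀ j : Fin d, (gramSchmidtNormed ℝ w j : EuclideanSpace ℝ (Fin d)) ≠ 0 := by
    intro j hzero
    have hz : gramSchmidt ℝ w j = 0 := by
      rw [gramSchmidtNormed] at hzero
      rcases smul_eq_zero.mp hzero with h' | h'
    -- coefficient zero means the norm is zero
      · have : ‖gramSchmidt ℝ w j‖ = 0 := by
          simpa using inv_eq_zero.mp h'
        exact norm_eq_zero.mp this
      · exact h'
    have hmem : w j ∈ Submodule.span ℝ (w '' {i : Fin d | i < j}) := by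
      have hdef := gramSchmidt_def' ℝ w j
      rw [hz, zero_add] at hdef
      rw [hdef]
      apply Submodule.sum_mem
      intro i hi
      have hij : i < j := Finset.mem_Iio.mp hi
      have h1 : ((ℝ ∙ gramSchmidt ℝ w i).starProjection (w j) : EuclideanSpace ℝ (Fin d))
          ∈ (ℝ ∙ gramSchmidt ℝ w i) := Submodule.starProjection_apply_mem _ _
      have h2 : (ℝ ∙ gramSchmidt ℝ w i) ≤ Submodule.span ℝ (w '' {i : Fin d | i < j}) := by
        rw [Submodule.span_singleton_le_iff_mem]
        have h3 : gramSchmidt ℝ w i ∈ Submodule.span ℝ (w '' Set.Iic i) :=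
          gramSchmidt_mem_span ℝ w le_rfl
        refine Submodule.span_mono (Set.image_mono (f := w) ?_) h3
        intro x hx
        exact lt_of_le_of_lt hx hij
      exact h2 h1
    have h0 : Metric.infDist (w j)
        ((Submodule.span ℝ (w '' {i : Fin d | i < j}) : Submodule ℝ (EuclideanSpace ℝ (Fin d))) : Set (EuclideanSpace ℝ (Fin d))) = 0 :=
      Metric.infDist_zero_of_mem hmem
    have := hw j
    rw [h0] at this
    linarith
  set b : OrthonormalBasis (Fin d) ℝ (EuclideanSpace ℝ (Fin d)) := gramSchmidtOrthonormalBasis h w with hb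
  have hbj : ∀ j, b j = gramSchmidtNormed ℝ w j := fun j =>
    gramSchmidtOrthonormalBasis_apply h (hgs j)
  set A : Fin d → Fin d → ℝ := fun j i => b.repr (w j) i with hA
  have htri : ∀ j i : Fin d, (j:ℕ) < (i:ℕ) → A j i = 0 := by
    intro j i hji
    exact gramSchmidtOrthonormalBasis_inv_triangular' h w (show j < i from hji)
  have hdiag : ∀ j, 1 ≤ |A j j| := by
    intro j
    set P := Submodule.span ℝ (w '' {i : Fin d | i < j}) with hP
    have hy : w j - A j j • b j ∈ P := by
      have hrepr := b.sum_repr (w j)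
      have h2 : (∑ i ∈ Finset.univ.erase j, b.repr (w j) i • b i) + b.repr (w j) j • b j
          = ∑ i, b.repr (w j) i • b i := Finset.sum_erase_add _ _ (Finset.mem_univ j)
      have h3 : w j - A j j • b j = ∑ i ∈ Finset.univ.erase j, b.repr (w j) i • b i :=
        (eq_sub_of_add_eq (h2.trans hrepr)).symm
      rw [h3]
      apply Submodule.sum_mem
      intro i hi
      rcases lt_or_gt_of_ne (Finset.ne_of_mem_erase hi) with hlt | hgt
      · apply Submodule.smul_mem
        rw [hbj i, gramSchmidtNormed]
        apply Submodule.smul_mem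
        have h4 : gramSchmidt ℝ w i ∈ Submodule.span ℝ (w '' Set.Iic i) :=
          gramSchmidt_mem_span ℝ w le_rfl
        refine Submodule.span_mono (Set.image_mono (f := w) ?_) h4
        intro x hx
        exact lt_of_le_of_lt hx hlt
      · have hz : b.repr (w j) i = 0 :=
          gramSchmidtOrthonormalBasis_inv_triangular' h w hgt
        rw [show (b.repr (w j) i • b i : EuclideanSpace ℝ (Fin d)) = 0 by rw [hz, zero_smul]]
        exact Submodule.zero_mem _
    have hle : Metric.infDist (w j) (P : Set (EuclideanSpace ℝ (Fin d))) ≤ |A j j| := by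
      have h5 : Metric.infDist (w j) (P : Set (EuclideanSpace ℝ (Fin d))) ≤ dist (w j) (w j - A j j • b j) :=
        Metric.infDist_le_dist_of_mem hy
      have h6 : dist (w j) (w j - A j j • b j) = ‖A j j • b j‖ := by
        rw [dist_eq_norm]
        congr 1
        abel
      have h7 : ‖A j j • b j‖ = |A j j| := by
        rw [norm_smul, b.orthonormal.1 j]
        simp [Real.norm_eq_abs]
      rw [h6, h7] at h5
      exact h5
    exact (hw j).trans hle
  -- Parseval
  have hinner : ∀ (ζ : EuclideanSpace ℝ (Fin d)) (j : Fin d), ⟪ζ, w j⟫ = ∑ i, b.repr ζ i * A j i := by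
    intro ζ j
    rw [← b.repr.inner_map_map ζ (w j), PiLp.inner_apply]
    simp [RCLike.inner_apply, conj_trivial]
    exact Finset.sum_congr rfl fun i _ => mul_comm _ _
  set f : EuclideanSpace ℝ (Fin d) → ℝ :=
    fun ζ => Real.exp (-lam * ∑ j, distNearestInt (⟪ζ, w j⟫) ^ 2) with hf
  have hfm : Measurable f := by
    apply Real.measurable_exp.comp
    apply Measurable.const_mul
    apply Finset.measurable_sum
    intro j _
    apply Measurable.pow_const
    apply measurable_distNearestInt.comp
    exact (Continuous.inner continuous_id continuous_const).measurable
  have hfnn : ∀ ζ, 0 ≤ f ζ := fun ζ => Real.exp_nonneg _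
  have heq1 : ∫ ζ in Metric.closedBall (0 : EuclideanSpace ℝ (Fin d)) 1, f ζ
      = (∫⁻ ζ in Metric.closedBall (0 : EuclideanSpace ℝ (Fin d)) 1,
          ENNReal.ofReal (f ζ)).toReal := by
    rw [integral_eq_lintegral_of_nonneg_ae (Filter.Eventually.of_forall hfnn)
      hfm.aestronglyMeasurable]
  set ψ := MeasurableEquiv.toLp 2 (Fin d → ℝ) with hψ
  set G : (Fin d → ℝ) ≃ᵐ EuclideanSpace ℝ (Fin d) := ψ.trans b.measurableEquiv.symm with hG
  have hGmp : MeasurePreserving (⇑G) volume volume := by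
    have h1 : MeasurePreserving (⇑ψ) volume volume :=
      (EuclideanSpace.volume_preserving_symm_measurableEquiv_toLp (Fin d)).symm
    have h2 : MeasurePreserving (⇑b.measurableEquiv.symm) volume volume :=
      b.measurePreserving_measurableEquiv.symm
    exact h2.comp h1
  have hGval : ∀ x, G x = b.repr.symm (ψ x) := fun x => rfl
  have hGrepr : ∀ x : Fin d → ℝ, b.repr (G x) = ψ x := by
    intro x; rw [hGval]; exact b.repr.apply_symm_apply (ψ x)
  have hψapp : ∀ (x : Fin d → ℝ) (i : Fin d), (ψ x) i = x i := fun x i => rfl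
  have hGinner : ∀ (x : Fin d → ℝ) (j : Fin d), ⟪G x, w j⟫ = ∑ i, A j i * x i := by
    intro x j
    rw [hinner (G x) j]
    refine Finset.sum_congr rfl fun i _ => ?_
    rw [hGrepr, hψapp, mul_comm]
  have hGnorm : ∀ x, ‖G x‖ = ‖ψ x‖ := by
    intro x; rw [hGval]; exact b.repr.symm.norm_map (ψ x)
  have hsub : (⇑G) ⁻¹' (Metric.closedBall (0 : EuclideanSpace ℝ (Fin d)) 1)
      ⊆ Set.univ.pi (fun _ : Fin d => Set.Icc (-1:ℝ) 1) := by
    intro x hx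
    have hx1 : ‖G x‖ ≤ 1 := by
      simpa [Metric.mem_closedBall, dist_zero_right] using hx
    intro i _
    have h3 : |x i| ≤ ‖ψ x‖ := by
      rw [EuclideanSpace.norm_eq (ψ x)]
      have h5 : |x i| = Real.sqrt (‖(ψ x) i‖ ^ 2) := by
        rw [hψapp, Real.norm_eq_abs, Real.sqrt_sq_eq_abs, abs_abs]
      rw [h5]
      apply Real.sqrt_le_sqrt
      exact Finset.single_le_sum (f := fun i => ‖(ψ x) i‖ ^ 2)
        (fun i _ => by positivity) (Finset.mem_univ i)
    rw [hGnorm] at hx1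
    have := abs_le.mp (h3.trans hx1)
    exact ⟨this.1, this.2⟩
  have heq2 : ∫⁻ ζ in Metric.closedBall (0 : EuclideanSpace ℝ (Fin d)) 1, ENNReal.ofReal (f ζ)
      = ∫⁻ x in (⇑G) ⁻¹' (Metric.closedBall (0 : EuclideanSpace ℝ (Fin d)) 1),
          ENNReal.ofReal (f (G x)) ∂(volume : Measure (Fin d → ℝ)) :=
    (hGmp.setLIntegral_comp_preimage_emb G.measurableEmbedding _ _).symm
  have hfG : ∀ x : Fin d → ℝ, ENNReal.ofReal (f (G x))
      = ENNReal.ofReal (Real.exp (-lam * ∑ j, distNearestInt (∑ i, A j i * x i) ^ 2)) := by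
    intro x
    rw [hf]
    simp only [hGinner]
  have hbox := box_bound d lam hlam A hdiag htri
  have hfinal : ∫⁻ ζ in Metric.closedBall (0 : EuclideanSpace ℝ (Fin d)) 1, ENNReal.ofReal (f ζ)
      ≤ ENNReal.ofReal ((KC lam) ^ d) := by
    rw [heq2]
    refine (lintegral_mono_set hsub).trans ?_
    calc ∫⁻ x in Set.univ.pi (fun _ : Fin d => Set.Icc (-1:ℝ) 1),
          ENNReal.ofReal (f (G x)) ∂(volume : Measure (Fin d → ℝ))
        = ∫⁻ x in Set.univ.pi (fun _ : Fin d => Set.Icc (-1:ℝ) 1),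
          ENNReal.ofReal (Real.exp (-lam * ∑ j, distNearestInt (∑ i, A j i * x i) ^ 2))
            ∂(volume : Measure (Fin d → ℝ)) := lintegral_congr fun x => hfG x
      _ ≤ ENNReal.ofReal ((KC lam) ^ d) := hbox
  have harith : (KC lam) ^ d = (3 * (Real.exp 1 * Real.sqrt π)) ^ d * (1 + lam) ^ (-(d:ℝ)/2) := by
    have hX : (((1+lam) ^ (-(1:ℝ)/2) : ℝ)) ^ d = (1+lam) ^ (-(d:ℝ)/2) := by
      rw [← Real.rpow_natCast ((1+lam) ^ (-(1:ℝ)/2)) d,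
        ← Real.rpow_mul (by linarith : (0:ℝ) ≤ 1+lam)]
      congr 1
      ring
    rw [show KC lam = 3 * (Real.exp 1 * Real.sqrt π) * (1 + lam) ^ (-(1:ℝ)/2) from rfl,
      mul_pow, hX]
  calc ∫ ζ in Metric.closedBall (0 : EuclideanSpace ℝ (Fin d)) 1, f ζ
      = (∫⁻ ζ in Metric.closedBall (0 : EuclideanSpace ℝ (Fin d)) 1,
          ENNReal.ofReal (f ζ)).toReal := heq1
    _ ≤ (ENNReal.ofReal ((KC lam) ^ d)).toReal :=
        ENNReal.toReal_mono ENNReal.ofReal_ne_top hfinal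
    _ = (KC lam) ^ d := ENNReal.toReal_ofReal (pow_nonneg (KC_nonneg hlam) d)
    _ = (3 * (Real.exp 1 * Real.sqrt π)) ^ d * (1 + lam) ^ (-(d:ℝ)/2) := harith
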